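/- (Theorem 2, smoothness part.) Consider a continuous game with N players, strategy sets S_i ⊆ ℝ^d_+, joint strategy space S = ∏_{i=1}^N S_i, payoffs π_i : S → ℝ, and social function γ : ℝ^{Nd}_+ → ℝ with γ(0) = 0. Suppose: γ is monotone; γ is playerwise DR-submodular; γ has generalized submodularity ratio at least η ∈ (0, 1], i.e. for all s, s' ∈ S, ∑_{i=1}^N [γ(s_i + s'_i, s_{-i}) − γ(s)] ≥ η (γ(s + s') − γ(s)); and π_i(s) ≥ γ(s) − γ(0, s_{-i}) for every player i and every s ∈ S. Then for all outcomes s, s⋆ ∈ S, ∑_{i=1}^N π_i(s⋆_i, s_{-i}) ≥ η γ(s⋆) − η γ(s). -/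

import Mathlib

/-- `f` is monotone on `X`: `f x ≤ f y` whenever `x ≤ y` in `X`. -/
def MonotoneOnSet {ι : Type*} (X : Set (ι → ℝ)) (f : (ι → ℝ) → ℝ) : Prop :=
  ∀ ⦃x⦄, x ∈ X → ∀ ⦃y⦄, y ∈ X → x ≤ y → f x ≤ f y

/-- `f` is DR-submodular on `X`. -/
def DRSubmodularOn {ι : Type*} [DecidableEq ι] (X : Set (ι → ℝ)) (f : (ι → ℝ) → ℝ) : Prop :=
  ∀ ⦃x y : ι → ℝ⦄, x ∈ X → y ∈ X → x ≤ y →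
    ∀ i : ι, ∀ k : ℝ, 0 ≤ k →
      x + Pi.single i k ∈ X → y + Pi.single i k ∈ X →
        f (x + Pi.single i k) - f x ≥ f (y + Pi.single i k) - f y

/-- Replace player `i`'s block of the joint strategy `s` by `v`, i.e. the outcome
`(v, s₋ᵢ)`. -/
def upd {N d : ℕ} (s : Fin N × Fin d → ℝ) (i : Fin N) (v : Fin d → ℝ) :
    Fin N × Fin d → ℝ :=
  fun q => if q.1 = i then v q.2 else s q

/-- The joint strategy space `S = ∏ᵢ Sᵢ`, viewed inside `ℝ^{Nd}`. -/
def joint {N d : ℕ} (S : Fin N → Set (Fin d → ℝ)) : Set (Fin N × Fin d → ℝ) :=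
  {s | ∀ i : Fin N, (fun r => s (i, r)) ∈ S i}

/-- `γ` is playerwise DR-submodular on `ℝ^{Nd}_+`: for every player `i` and fixed strategies
of the other players, the map `sᵢ ↦ γ(sᵢ, s₋ᵢ)` is DR-submodular on `ℝ^d_+`. -/
def PlayerwiseDRSubmodular {N d : ℕ} (γ : (Fin N × Fin d → ℝ) → ℝ) : Prop :=
  ∀ (i : Fin N) (s : Fin N × Fin d → ℝ), 0 ≤ s →
    DRSubmodularOn {v : Fin d → ℝ | 0 ≤ v} (fun v => γ (upd s i v))

/-! Each player's deviation payoff `πᵢ(s⋆ᵢ, s₋ᵢ)` is at least `γ(s⋆ᵢ, s₋ᵢ) − γ(0, s₋ᵢ)`, and by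
diminishing returns along player `i`'s block this dominates the marginal gain
`γ(sᵢ + s⋆ᵢ, s₋ᵢ) − γ(s)`. Summing over players, the generalized submodularity ratio bounds the
total from below by `η (γ(s + s⋆) − γ(s))`, and monotonicity replaces `γ(s + s⋆)` by `γ(s⋆)`. -/

section DRSubmodular

variable {ι : Type*} [DecidableEq ι] {f : (ι → ℝ) → ℝ}

theorem DRSubmodularOn.sum_single_marginal_antitone
    (hf : DRSubmodularOn {v : ι → ℝ | 0 ≤ v} f) {x y v : ι → ℝ}
    (hx : 0 ≤ x) (hxy : x ≤ y) (hv : 0 ≤ v) (T : Finset ι) :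
    f (y + ∑ l ∈ T, Pi.single l (v l)) - f y ≤ f (x + ∑ l ∈ T, Pi.single l (v l)) - f x := by
  induction T using Finset.induction with
  | empty => simp
  | @insert j T hj ih =>
    set w := ∑ l ∈ T, Pi.single l (v l)
    have hw : 0 ≤ w := Finset.sum_nonneg fun l _ => Pi.single_nonneg.2 (hv l)
    have he : (0 : ι → ℝ) ≤ Pi.single j (v j) := Pi.single_nonneg.2 (hv j)
    have hy : 0 ≤ y := hx.trans hxy
    have step := hf (x := x + w) (y := y + w) (add_nonneg hx hw) (add_nonneg hy hw)
      (add_le_add_left hxy w) j (v j) (hv j)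
      (add_nonneg (add_nonneg hx hw) he) (add_nonneg (add_nonneg hy hw) he)
    rw [Finset.sum_insert hj, add_comm (Pi.single j (v j)) w, ← add_assoc, ← add_assoc]
    linarith

theorem DRSubmodularOn.marginal_antitone [Fintype ι]
    (hf : DRSubmodularOn {v : ι → ℝ | 0 ≤ v} f) {x y v : ι → ℝ}
    (hx : 0 ≤ x) (hxy : x ≤ y) (hv : 0 ≤ v) :
    f (y + v) - f y ≤ f (x + v) - f x := by
  simpa only [Finset.univ_sum_single] using hf.sum_single_marginal_antitone hx hxy hv .univ

end DRSubmodular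

section Upd

variable {N d : ℕ}

theorem upd_self (s : Fin N × Fin d → ℝ) (i : Fin N) : upd s i (fun r => s (i, r)) = s := by
  funext ⟨j, r⟩
  by_cases h : j = i
  · subst h; simp [upd]
  · simp [upd, h]

theorem upd_upd (s : Fin N × Fin d → ℝ) (i : Fin N) (v w : Fin d → ℝ) :
    upd (upd s i v) i w = upd s i w := by
  funext q
  by_cases h : q.1 = i <;> simp [upd, h]

theorem upd_mem_joint {S : Fin N → Set (Fin d → ℝ)} {s : Fin N × Fin d → ℝ}
    (hs : s ∈ joint S) (i : Fin N) {v : Fin d → ℝ} (hv : v ∈ S i) : upd s i v ∈ joint S := by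
  intro j
  by_cases h : j = i
  · subst h; simpa [upd] using hv
  · simpa [upd, h] using hs j

theorem nonneg_of_mem_joint {S : Fin N → Set (Fin d → ℝ)} (hS : ∀ i, ∀ v ∈ S i, 0 ≤ v)
    {s : Fin N × Fin d → ℝ} (hs : s ∈ joint S) : 0 ≤ s :=
  fun q => hS q.1 _ (hs q.1) q.2

end Upd

theorem PlayerwiseDRSubmodular.marginal_le_upd_sub_upd_zero {N d : ℕ}
    {γ : (Fin N × Fin d → ℝ) → ℝ} (hγ : PlayerwiseDRSubmodular γ) {s : Fin N × Fin d → ℝ}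
    (hs : 0 ≤ s) (i : Fin N) {v : Fin d → ℝ} (hv : 0 ≤ v) :
    γ (upd s i (fun r => s (i, r) + v r)) - γ s ≤ γ (upd s i v) - γ (upd s i 0) := by
  have := (hγ i s hs).marginal_antitone le_rfl (fun r => hs (i, r)) hv
  rw [zero_add, upd_self] at this
  exact this

theorem generalized_submodularity_smooth_general {N d : ℕ}
    (S : Fin N → Set (Fin d → ℝ)) (hS : ∀ i, ∀ v ∈ S i, 0 ≤ v)
    (π : Fin N → (Fin N × Fin d → ℝ) → ℝ)
    (γ : (Fin N × Fin d → ℝ) → ℝ)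
    (hmono : MonotoneOnSet {x : Fin N × Fin d → ℝ | 0 ≤ x} γ)
    (hplayer : PlayerwiseDRSubmodular γ)
    (η : ℝ) (hη0 : 0 < η)
    (hgen : ∀ s ∈ joint S, ∀ s' ∈ joint S,
      ∑ i : Fin N, (γ (upd s i (fun r => s (i, r) + s' (i, r))) - γ s) ≥
        η * (γ (s + s') - γ s))
    (hpayoff : ∀ i : Fin N, ∀ s ∈ joint S, π i s ≥ γ s - γ (upd s i 0)) :
    ∀ s ∈ joint S, ∀ sstar ∈ joint S,
      ∑ i : Fin N, π i (upd s i (fun r => sstar (i, r))) ≥ η * γ sstar - η * γ s := by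
  intro s hs sstar hsstar
  have hs0 := nonneg_of_mem_joint hS hs
  have hsstar0 := nonneg_of_mem_joint hS hsstar
  have hdeviation (i : Fin N) :
      γ (upd s i (fun r => s (i, r) + sstar (i, r))) - γ s ≤
        π i (upd s i (fun r => sstar (i, r))) := by
    have hpay := hpayoff i _ (upd_mem_joint hs i (hsstar i))
    rw [upd_upd] at hpay
    have := hplayer.marginal_le_upd_sub_upd_zero hs0 i (v := fun r => sstar (i, r))
      fun r => hsstar0 (i, r)
    linarith
  have hle_add : γ sstar ≤ γ (s + sstar) :=
    hmono hsstar0 (add_nonneg hs0 hsstar0) (le_add_of_nonneg_left hs0)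
  calc η * γ sstar - η * γ s
      = η * (γ sstar - γ s) := by ring
    _ ≤ η * (γ (s + sstar) - γ s) := by gcongr
    _ ≤ ∑ i, (γ (upd s i (fun r => s (i, r) + sstar (i, r))) - γ s) := hgen s hs sstar hsstar
    _ ≤ ∑ i, π i (upd s i (fun r => sstar (i, r))) := Finset.sum_le_sum fun i _ => hdeviation i

/-- Theorem 2 (smoothness part): if the monotone social function `γ` is playerwise
DR-submodular, has generalized submodularity ratio at least `η`, and the payoff condition (ii)
holds, then the game is `(η, η)`-smooth. -/
theorem generalized_submodularity_smooth {N d : ℕ}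
    (S : Fin N → Set (Fin d → ℝ)) (hS : ∀ i, ∀ v ∈ S i, 0 ≤ v)
    (π : Fin N → (Fin N × Fin d → ℝ) → ℝ)
    (γ : (Fin N × Fin d → ℝ) → ℝ) (hγ0 : γ 0 = 0)
    (hmono : MonotoneOnSet {x : Fin N × Fin d → ℝ | 0 ≤ x} γ)
    (hplayer : PlayerwiseDRSubmodular γ)
    (η : ℝ) (hη0 : 0 < η) (hη1 : η ≤ 1)
    (hgen : ∀ s ∈ joint S, ∀ s' ∈ joint S,
      ∑ i : Fin N, (γ (upd s i (fun r => s (i, r) + s' (i, r))) - γ s) ≥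
        η * (γ (s + s') - γ s))
    (hpayoff : ∀ i : Fin N, ∀ s ∈ joint S, π i s ≥ γ s - γ (upd s i 0)) :
    ∀ s ∈ joint S, ∀ sstar ∈ joint S,
      ∑ i : Fin N, π i (upd s i (fun r => sstar (i, r))) ≥ η * γ sstar - η * γ s :=
  generalized_submodularity_smooth_general S hS π γ hmono hplayer η hη0 hgen hpayoff
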